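/- The series $R(x,y,q) = \sum_{i,j,k,\ell \ge 0} x^{2j+k+\ell} y^{i+j+k} q^{2i^2 + 6ij + 4ik + 2i\ell + 6j^2 + 8jk + 4j\ell + 3k^2 + 3k\ell + \ell^2} / ((q^2;q^2)_i (q^2;q^2)_j (q;q)_k (q;q)_\ell)$ satisfies the functional equation $R(x,y,q) = R(xq,y,q) + xq\, R(xq^2,y,q)$. -/

import Mathlib

noncomputable instance : TopologicalSpace (MvPowerSeries (Fin 3) ℚ) := Pi.topologicalSpace

open MvPowerSeries

/-- `(q^a; q^b)_n` where `q` is the third variable. -/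
noncomputable def poch (a b n : ℕ) : MvPowerSeries (Fin 3) ℚ :=
  ∏ t ∈ Finset.range n, (1 - (X 2 : MvPowerSeries (Fin 3) ℚ) ^ (a + b * t))

/-- The two-variable series `R(x,y,q)`, as a function of the series substituted for `x`
and `y`, with `q` the third variable. -/
noncomputable def R (x y : MvPowerSeries (Fin 3) ℚ) : MvPowerSeries (Fin 3) ℚ :=
  ∑' p : ℕ × ℕ × ℕ × ℕ,
    x ^ (2*p.2.1 + p.2.2.1 + p.2.2.2) * y ^ (p.1 + p.2.1 + p.2.2.1) *
      (X 2 : MvPowerSeries (Fin 3) ℚ) ^ (2*p.1^2 + 6*p.1*p.2.1 + 4*p.1*p.2.2.1 + 2*p.1*p.2.2.2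
        + 6*p.2.1^2 + 8*p.2.1*p.2.2.1 + 4*p.2.1*p.2.2.2
        + 3*p.2.2.1^2 + 3*p.2.2.1*p.2.2.2 + p.2.2.2^2) *
      (poch 2 2 p.1 * poch 2 2 p.2.1 * poch 1 1 p.2.2.1 * poch 1 1 p.2.2.2)⁻¹


/-!
Write `D(i,j,k,l)` for the denominator of `R`. A factor `1 - q^e` with `e = l, k, 2j` or `2i` in
a summand cancels the last factor of one Pochhammer symbol in `D`; this shifts one summation
index by one and, unless that index is `l`, multiplies the summand by `y`. Cancelling `1 - q^l`
turns `R(x) - R(xq) - xq R(xq²)` into `defect 0`, and four further cancellations (in `k`, `j`,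
`k`, `i`) show `defect n = defect (n + 1)`. As every term of `defect n` is divisible by `y^n`,
every coefficient of `R(x) - R(xq) - xq R(xq²)` vanishes.
-/

instance : T2Space (MvPowerSeries (Fin 3) ℚ) := WithPiTopology.instT2Space

instance : IsTopologicalRing (MvPowerSeries (Fin 3) ℚ) :=
  WithPiTopology.instIsTopologicalRing (Fin 3) ℚ

noncomputable section

local notation "ℚ⟦x,y,q⟧" => MvPowerSeries (Fin 3) ℚ

abbrev Idx := ℕ × ℕ × ℕ × ℕ

theorem poch_succ (a b n : ℕ) : poch a b (n + 1) = poch a b n * (1 - X 2 ^ (a + b * n)) :=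
  Finset.prod_range_succ _ _

theorem constantCoeff_poch {a : ℕ} (ha : a ≠ 0) (b n : ℕ) :
    constantCoeff (poch a b n) = 1 := by
  simp [poch, ha]

def denom (p : Idx) : ℚ⟦x,y,q⟧ :=
  poch 2 2 p.1 * poch 2 2 p.2.1 * poch 1 1 p.2.2.1 * poch 1 1 p.2.2.2

theorem constantCoeff_denom (p : Idx) : constantCoeff (denom p) = 1 := by
  simp [denom, constantCoeff_poch]

section QSum

def term (a b c : Idx → ℕ) (p : Idx) : ℚ⟦x,y,q⟧ :=
  X 0 ^ a p * X 1 ^ b p * X 2 ^ c p * (denom p)⁻¹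

def qSum (a b c : Idx → ℕ) : ℚ⟦x,y,q⟧ := ∑' p, term a b c p

variable {a b : Idx → ℕ}

theorem coeff_term_eq_zero (c : Idx → ℕ) {p : Idx} {d : Fin 3 →₀ ℕ}
    (h : d 0 < a p ∨ d 1 < b p) : coeff d (term a b c p) = 0 := by
  rw [term, X_pow_eq, X_pow_eq, X_pow_eq, monomial_mul_monomial, monomial_mul_monomial,
    coeff_monomial_mul, if_neg]
  intro hle
  have h0 := hle 0
  have h1 := hle 1
  simp only [Finsupp.coe_add, Pi.add_apply, Finsupp.single_eq_same, ne_eq, zero_ne_one,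
    not_false_eq_true, Finsupp.single_eq_of_ne, add_zero, Fin.reduceEq, one_ne_zero,
    zero_add] at h0 h1
  omega

theorem summable_term
    (hab : ∀ p : Idx, p.1 + p.2.1 + p.2.2.1 + p.2.2.2 ≤ a p + b p)
    (c : Idx → ℕ) : Summable (term a b c) := by
  refine WithPiTopology.summable_iff_summable_coeff.mpr fun d => summable_of_ne_finset_zero
    (s := Finset.Iic (d 0 + d 1, d 0 + d 1, d 0 + d 1, d 0 + d 1)) fun p hp => ?_
  refine coeff_term_eq_zero c (by_contra fun h => hp ?_)
  have := hab p
  simp only [Finset.mem_Iic, Prod.le_def]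
  omega

theorem coeff_qSum_eq_zero
    (hab : ∀ p : Idx, p.1 + p.2.1 + p.2.2.1 + p.2.2.2 ≤ a p + b p)
    (c : Idx → ℕ) {d : Fin 3 →₀ ℕ} (hb : ∀ p, d 1 < b p) :
    coeff d (qSum a b c) = 0 := by
  rw [qSum, (summable_term hab c).map_tsum _ (WithPiTopology.continuous_coeff ℚ d)]
  simp [coeff_term_eq_zero c (Or.inr (hb _))]

theorem qSum_sub_qSum_add_eq
    (hab : ∀ p : Idx, p.1 + p.2.1 + p.2.2.1 + p.2.2.2 ≤ a p + b p)
    (c e : Idx → ℕ) {σ : Idx → Idx} (hσ : Function.Injective σ)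
    (he : ∀ p ∉ Set.range σ, e p = 0)
    (hdenom : ∀ p, denom (σ p) = denom p * (1 - X 2 ^ e (σ p))) :
    qSum a b c - qSum a b (c + e) = qSum (a ∘ σ) (b ∘ σ) (c ∘ σ) := by
  have hsupp : Function.support (fun p => term a b c p - term a b (c + e) p) ⊆ Set.range σ := by
    intro p hp
    by_contra hσp
    simp [term, he p hσp] at hp
  rw [qSum, qSum, ← (summable_term hab c).tsum_sub (summable_term hab _), ← hσ.tsum_eq hsupp]
  refine tsum_congr fun p => ?_
  have hunit : constantCoeff (1 - X 2 ^ e (σ p) : ℚ⟦x,y,q⟧) ≠ 0 := by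
    intro h0
    simpa [h0, constantCoeff_denom] using congrArg constantCoeff (hdenom p)
  have hinv : (denom (σ p))⁻¹ * (1 - X 2 ^ e (σ p)) = (denom p)⁻¹ := by
    rw [hdenom, MvPowerSeries.mul_inv_rev, mul_comm, ← mul_assoc,
      MvPowerSeries.mul_inv_cancel _ hunit, one_mul]
  simp only [term, Pi.add_apply, Function.comp_apply, pow_add, ← hinv]
  ring

end QSum

def quadForm (p : Idx) : ℕ :=
  2*p.1^2 + 6*p.1*p.2.1 + 4*p.1*p.2.2.1 + 2*p.1*p.2.2.2 + 6*p.2.1^2 + 8*p.2.1*p.2.2.1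
    + 4*p.2.1*p.2.2.2 + 3*p.2.2.1^2 + 3*p.2.2.1*p.2.2.2 + p.2.2.2^2

def qExp (cᵢ cⱼ cₖ cₗ c₀ : ℕ) (p : Idx) : ℕ :=
  quadForm p + cᵢ*p.1 + cⱼ*p.2.1 + cₖ*p.2.2.1 + cₗ*p.2.2.2 + c₀

def shiftedR (u v cᵢ cⱼ cₖ cₗ c₀ : ℕ) : ℚ⟦x,y,q⟧ :=
  qSum (fun p => 2*p.2.1 + p.2.2.1 + p.2.2.2 + u) (fun p => p.1 + p.2.1 + p.2.2.1 + v)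
    (qExp cᵢ cⱼ cₖ cₗ c₀)

theorem shiftedR_exponent_bound (u v : ℕ) (p : Idx) :
    p.1 + p.2.1 + p.2.2.1 + p.2.2.2 ≤
      (2*p.2.1 + p.2.2.1 + p.2.2.2 + u) + (p.1 + p.2.1 + p.2.2.1 + v) := by
  omega

section Shifts

variable (u v cᵢ cⱼ cₖ cₗ c₀ : ℕ)

theorem shiftedR_sub_shiftedR_l :
    shiftedR u v cᵢ cⱼ cₖ cₗ c₀ - shiftedR u v cᵢ cⱼ cₖ (cₗ + 1) c₀ =
      shiftedR (u + 1) v (cᵢ + 2) (cⱼ + 4) (cₖ + 3) (cₗ + 2) (c₀ + cₗ + 1) := by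
  have key := qSum_sub_qSum_add_eq (shiftedR_exponent_bound u v) (qExp cᵢ cⱼ cₖ cₗ c₀)
    (fun p => p.2.2.2) (σ := fun p => (p.1, p.2.1, p.2.2.1, p.2.2.2 + 1))
    (fun p p' h => by simpa [Prod.ext_iff] using h)
    (by rintro ⟨i, j, k, _ | l⟩ h; exacts [rfl, absurd ⟨(i, j, k, l), rfl⟩ h])
    (fun p => by simp only [denom, poch_succ]; ring_nf)
  unfold shiftedR
  convert key using 3 <;> (try funext p) <;>
    simp only [qExp, quadForm, Pi.add_apply, Function.comp_apply] <;> ring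

theorem shiftedR_sub_shiftedR_k :
    shiftedR u v cᵢ cⱼ cₖ cₗ c₀ - shiftedR u v cᵢ cⱼ (cₖ + 1) cₗ c₀ =
      shiftedR (u + 1) (v + 1) (cᵢ + 4) (cⱼ + 8) (cₖ + 6) (cₗ + 3) (c₀ + cₖ + 3) := by
  have key := qSum_sub_qSum_add_eq (shiftedR_exponent_bound u v) (qExp cᵢ cⱼ cₖ cₗ c₀)
    (fun p => p.2.2.1) (σ := fun p => (p.1, p.2.1, p.2.2.1 + 1, p.2.2.2))
    (fun p p' h => by simpa [Prod.ext_iff] using h)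
    (by rintro ⟨i, j, _ | k, l⟩ h; exacts [rfl, absurd ⟨(i, j, k, l), rfl⟩ h])
    (fun p => by simp only [denom, poch_succ]; ring_nf)
  unfold shiftedR
  convert key using 3 <;> (try funext p) <;>
    simp only [qExp, quadForm, Pi.add_apply, Function.comp_apply] <;> ring

theorem shiftedR_sub_shiftedR_j :
    shiftedR u v cᵢ cⱼ cₖ cₗ c₀ - shiftedR u v cᵢ (cⱼ + 2) cₖ cₗ c₀ =
      shiftedR (u + 2) (v + 1) (cᵢ + 6) (cⱼ + 12) (cₖ + 8) (cₗ + 4) (c₀ + cⱼ + 6) := by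
  have key := qSum_sub_qSum_add_eq (shiftedR_exponent_bound u v) (qExp cᵢ cⱼ cₖ cₗ c₀)
    (fun p => 2 * p.2.1) (σ := fun p => (p.1, p.2.1 + 1, p.2.2.1, p.2.2.2))
    (fun p p' h => by simpa [Prod.ext_iff] using h)
    (by rintro ⟨i, _ | j, k, l⟩ h; exacts [rfl, absurd ⟨(i, j, k, l), rfl⟩ h])
    (fun p => by simp only [denom, poch_succ]; ring_nf)
  unfold shiftedR
  convert key using 3 <;> (try funext p) <;>
    simp only [qExp, quadForm, Pi.add_apply, Function.comp_apply] <;> ring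

theorem shiftedR_sub_shiftedR_i :
    shiftedR u v cᵢ cⱼ cₖ cₗ c₀ - shiftedR u v (cᵢ + 2) cⱼ cₖ cₗ c₀ =
      shiftedR u (v + 1) (cᵢ + 4) (cⱼ + 6) (cₖ + 4) (cₗ + 2) (c₀ + cᵢ + 2) := by
  have key := qSum_sub_qSum_add_eq (shiftedR_exponent_bound u v) (qExp cᵢ cⱼ cₖ cₗ c₀)
    (fun p => 2 * p.1) (σ := fun p => (p.1 + 1, p.2.1, p.2.2.1, p.2.2.2))
    (fun p p' h => by simpa [Prod.ext_iff] using h)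
    (by rintro ⟨_ | i, j, k, l⟩ h; exacts [rfl, absurd ⟨(i, j, k, l), rfl⟩ h])
    (fun p => by simp only [denom, poch_succ]; ring_nf)
  unfold shiftedR
  convert key using 3 <;> (try funext p) <;>
    simp only [qExp, quadForm, Pi.add_apply, Function.comp_apply] <;> ring

end Shifts

theorem coeff_shiftedR_eq_zero (u : ℕ) {v : ℕ} (cᵢ cⱼ cₖ cₗ c₀ : ℕ) {d : Fin 3 →₀ ℕ}
    (hv : d 1 < v) : coeff d (shiftedR u v cᵢ cⱼ cₖ cₗ c₀) = 0 :=
  coeff_qSum_eq_zero (shiftedR_exponent_bound u v) _ fun _ => by omega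

theorem R_X0_mul_X2_pow (s : ℕ) : R (X 0 * X 2 ^ s) (X 1) = shiftedR 0 0 0 (2*s) s s 0 :=
  tsum_congr fun p => by simp only [term, qExp, quadForm, denom, mul_pow, ← pow_mul]; ring

theorem X0_mul_X2_mul_shiftedR (u v cᵢ cⱼ cₖ cₗ c₀ : ℕ) :
    X 0 * X 2 * shiftedR u v cᵢ cⱼ cₖ cₗ c₀ = shiftedR (u + 1) v cᵢ cⱼ cₖ cₗ (c₀ + 1) := by
  rw [shiftedR, qSum, ← (summable_term (shiftedR_exponent_bound u v) _).tsum_mul_left]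
  exact tsum_congr fun p => by simp only [term, qExp]; ring

/-- Reindexed by `k ↦ k + n`, `defect n` is the sum over `k ≥ n` of
`x^a y^(i+j+k) q^Q (q^l (1 - q^(2j+k-n)) - x q^(2a+1) (1 - q^(2i+k-n))) / D(i, j, k - n, l)`,
where `a = 2j+k+l` and `Q = quadForm (i, j, k, l)`. -/
def defect (n : ℕ) : ℚ⟦x,y,q⟧ :=
  shiftedR n n (4*n) (8*n) (6*n) (3*n + 1) (3*n^2)
    - shiftedR n n (4*n) (8*n + 2) (6*n + 1) (3*n + 1) (3*n^2)
    - (shiftedR (n + 1) n (4*n) (8*n + 4) (6*n + 2) (3*n + 2) (3*n^2 + 2*n + 1)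
      - shiftedR (n + 1) n (4*n + 2) (8*n + 4) (6*n + 3) (3*n + 2) (3*n^2 + 2*n + 1))

theorem R_sub_R_sub_eq_defect_zero :
    R (X 0) (X 1) - R (X 0 * X 2) (X 1) - X 0 * X 2 * R (X 0 * X 2 ^ 2) (X 1) = defect 0 := by
  have h₀ : R (X 0) (X 1) = shiftedR 0 0 0 0 0 0 0 := by simpa using R_X0_mul_X2_pow 0
  have h₁ : R (X 0 * X 2) (X 1) = shiftedR 0 0 0 2 1 1 0 := by simpa using R_X0_mul_X2_pow 1
  have hl := shiftedR_sub_shiftedR_l 0 0 0 0 0 0 0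
  rw [h₀, h₁, R_X0_mul_X2_pow, X0_mul_X2_mul_shiftedR, defect]
  norm_num at hl ⊢
  linear_combination hl

theorem defect_succ (n : ℕ) : defect (n + 1) = defect n := by
  have hk := shiftedR_sub_shiftedR_k n n (4*n) (8*n) (6*n) (3*n + 1) (3*n^2)
  have hj := shiftedR_sub_shiftedR_j n n (4*n) (8*n) (6*n + 1) (3*n + 1) (3*n^2)
  have hk' := shiftedR_sub_shiftedR_k (n + 1) n (4*n) (8*n + 4) (6*n + 2) (3*n + 2)
    (3*n^2 + 2*n + 1)
  have hi := shiftedR_sub_shiftedR_i (n + 1) n (4*n) (8*n + 4) (6*n + 3) (3*n + 2)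
    (3*n^2 + 2*n + 1)
  unfold defect
  -- `ring_nf` also normalises the natural-number parameters of `shiftedR`
  ring_nf at hk hj hk' hi ⊢
  linear_combination hk' + hi - hk - hj

theorem defect_zero : defect 0 = 0 := by
  ext d
  have hconst (n : ℕ) : defect n = defect 0 := by
    induction n with
    | zero => rfl
    | succ n ih => rw [defect_succ, ih]
  rw [← hconst (d 1 + 1), defect]
  simp only [map_sub, coeff_shiftedR_eq_zero _ _ _ _ _ _ (Nat.lt_succ_self (d 1)), sub_self,
    map_zero]

end

/-- The functional equation `R(x,y,q) = R(xq,y,q) + xq·R(xq²,y,q)`. -/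
theorem R_functional_equation :
    R (X 0) (X 1) =
      R (X 0 * X 2) (X 1) + X 0 * X 2 * R (X 0 * (X 2) ^ 2) (X 1) := by
  rw [← sub_eq_zero, ← sub_sub, R_sub_R_sub_eq_defect_zero, defect_zero]
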